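/- arXiv:2309.02755 — 2 statements merged into one kernel-verified Lean document; each statement's English description precedes it below -/
import Mathlib

section
/- The star-controlled GCID system Π = (3, {a, b, A, B}, {a, b}, {AB}, H, 1, {1}, R) with rules r1.1: (1, (λ, a, A)_I, 2), r1.2: (1, (λ, b, A)_I, 3), r1.3: (1, (λ, B, λ)_D, 2), r2.1: (2, (λ, a, B)_I, 1), r2.2: (2, (λ, A, λ)_D, 1), r3.1: (3, (λ, b, B)_I, 1) generates exactly the copy language { ww : w ∈ {a, b}* }; in particular { ww : w ∈ {a, b}* } ∈ GCID_S(3; 1, 0, 1; 1, 0, 0). -/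
/-!
Graph-controlled insertion-deletion (GCID) systems.

Symbols are drawn from the universal symbol set `ℕ`, strings are lists of
symbols.  A GCID system `Π = (k, V, T, A, H, i0, F, R)` has `k` components;
rules `(i, r, j)` move a string from component `i` to component `j`, where
`r` is an insertion rule `(u, η, v)_I` (rewriting `uv → uηv`) or a deletion
rule `(u, δ, v)_D` (rewriting `uδv → uv`), with `u, v ∈ V*` and `η, δ ∈ V⁺`.
-/

namespace GCIDPaper

/-- Strings over the universal symbol set `ℕ`. -/
abbrev Word : Type := List ℕ

/-- An insertion rule `(u, s, v)_I` (when `isInsertion = true`) or a deletion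
rule `(u, s, v)_D` (when `isInsertion = false`), with left context `lctx = u`,
inserted resp. deleted string `core = s`, and right context `rctx = v`. -/
structure InsDelRule : Type where
  isInsertion : Bool
  lctx : Word
  core : Word
  rctx : Word
  deriving DecidableEq

/-- The insertion rule `(u, η, v)_I`. -/
def insRule (u η v : Word) : InsDelRule := ⟨true, u, η, v⟩

/-- The deletion rule `(u, δ, v)_D`. -/
def delRule (u δ v : Word) : InsDelRule := ⟨false, u, δ, v⟩

/-- Applying a rule to a string: the insertion rule `(u, η, v)_I` corresponds
to the rewriting `uv → uηv`, the deletion rule `(u, δ, v)_D` to `uδv → uv`. -/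
def InsDelRule.Applies (r : InsDelRule) (w w' : Word) : Prop :=
  (r.isInsertion = true →
    ∃ x y, w = x ++ r.lctx ++ r.rctx ++ y ∧
      w' = x ++ r.lctx ++ r.core ++ r.rctx ++ y) ∧
  (r.isInsertion = false →
    ∃ x y, w = x ++ r.lctx ++ r.core ++ r.rctx ++ y ∧
      w' = x ++ r.lctx ++ r.rctx ++ y)

/-- A graph-controlled insertion-deletion system.  The components are
numbered `1, …, k`; `i0` is the initial component, `F` the set of final
components, `axioms` the finite set of axioms (placed in component `i0`),
and `R` the finite set of rules `(i, r, j)`. -/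
structure System : Type where
  k : ℕ
  V : Finset ℕ
  T : Finset ℕ
  axioms : Finset Word
  i0 : ℕ
  F : Finset ℕ
  R : Finset (ℕ × InsDelRule × ℕ)
  k_pos : 1 ≤ k
  T_sub_V : T ⊆ V
  axioms_over_V : ∀ w ∈ axioms, ∀ a ∈ w, a ∈ V
  i0_mem : i0 ∈ Finset.Icc 1 k
  F_sub : F ⊆ Finset.Icc 1 k
  R_wf : ∀ q ∈ R, q.1 ∈ Finset.Icc 1 k ∧ q.2.2 ∈ Finset.Icc 1 k ∧
    q.2.1.core ≠ [] ∧ (∀ a ∈ q.2.1.lctx, a ∈ V) ∧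
    (∀ a ∈ q.2.1.core, a ∈ V) ∧ (∀ a ∈ q.2.1.rctx, a ∈ V)

/-- One derivation step between configurations: `(w)_i ⇒ (w')_j` if some rule
`(i, r, j)` of the system applied to `w` yields `w'`. -/
def Step (S : System) (c c' : Word × ℕ) : Prop :=
  ∃ q ∈ S.R, q.1 = c.2 ∧ q.2.2 = c'.2 ∧ q.2.1.Applies c.1 c'.1

/-- The reflexive-transitive closure `⇒*` of the step relation. -/
def Derives (S : System) : Word × ℕ → Word × ℕ → Prop :=
  Relation.ReflTransGen (Step S)

/-- The language generated:
`L(Π) = { w ∈ T* : (x)_{i0} ⇒* (w)_{i_f} for some axiom x and some i_f ∈ F }`. -/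
def language (S : System) : Set Word :=
  { w | (∀ a ∈ w, a ∈ S.T) ∧
    ∃ x ∈ S.axioms, ∃ f ∈ S.F, Derives S (x, S.i0) (w, f) }

/-- A single rule obeys the size bounds `(n, i', i''; m, j', j'')`. -/
def InsDelRule.SizeLE (r : InsDelRule) (n i' i'' m j' j'' : ℕ) : Prop :=
  (r.isInsertion = true →
    r.core.length ≤ n ∧ r.lctx.length ≤ i' ∧ r.rctx.length ≤ i'') ∧
  (r.isInsertion = false →
    r.core.length ≤ m ∧ r.lctx.length ≤ j' ∧ r.rctx.length ≤ j'')

/-- The system has size `(k; n, i', i''; m, j', j'')`. -/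
def HasSize (S : System) (k n i' i'' m j' j'' : ℕ) : Prop :=
  S.k = k ∧ ∀ q ∈ S.R, q.2.1.SizeLE n i' i'' m j' j''

/-- Star-controlled: the underlying undirected control graph (with an edge
`{Ci, Cj}` whenever there is a rule `(i, r, j)`) has exactly the edge set
`{ {C1, Ci} : 2 ≤ i ≤ k }`; in particular there are no loops. -/
def StarControlled (S : System) : Prop :=
  (∀ q ∈ S.R, ∃ i ∈ Finset.Icc 2 S.k, ({q.1, q.2.2} : Finset ℕ) = {1, i}) ∧
  (∀ i ∈ Finset.Icc 2 S.k, ∃ q ∈ S.R, ({q.1, q.2.2} : Finset ℕ) = {1, i})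

/-- The class `GCID(k; n, i', i''; m, j', j'')` of languages generated by GCID
systems of the given size. -/
def GCIDClass (k n i' i'' m j' j'' : ℕ) : Set (Set Word) :=
  { L | ∃ S : System, HasSize S k n i' i'' m j' j'' ∧ language S = L }

/-- The class `GCID_S(k; n, i', i''; m, j', j'')` of languages generated by
star-controlled GCID systems of the given size. -/
def GCID_S (k n i' i'' m j' j'' : ℕ) : Set (Set Word) :=
  { L | ∃ S : System, StarControlled S ∧ HasSize S k n i' i'' m j' j'' ∧
    language S = L }

/-- The star-controlled GCID system
`Π = (3, {a, b, A, B}, {a, b}, {AB}, H, 1, {1}, R)` (encoded as `a = 0`,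
`b = 1`, `A = 2`, `B = 3`) with rules
`r1.1 : (1, (λ, a, A)_I, 2)`, `r1.2 : (1, (λ, b, A)_I, 3)`,
`r1.3 : (1, (λ, B, λ)_D, 2)`, `r2.1 : (2, (λ, a, B)_I, 1)`,
`r2.2 : (2, (λ, A, λ)_D, 1)`, `r3.1 : (3, (λ, b, B)_I, 1)`. -/
def copySystem : System where
  k := 3
  V := {0, 1, 2, 3}
  T := {0, 1}
  axioms := {[2, 3]}
  i0 := 1
  F := {1}
  R := {(1, insRule [] [0] [2], 2), (1, insRule [] [1] [2], 3),
        (1, delRule [] [3] [], 2), (2, insRule [] [0] [3], 1),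
        (2, delRule [] [2] [], 1), (3, insRule [] [1] [3], 1)}
  k_pos := by decide
  T_sub_V := by decide
  axioms_over_V := by decide
  i0_mem := by decide
  F_sub := by decide
  R_wf := by decide

/-- The copy language `{ ww : w ∈ {a, b}* }`. -/
def copyLang : Set Word :=
  { u | ∃ w : Word, (∀ a ∈ w, a = 0 ∨ a = 1) ∧ u = w ++ w }

/-! The markers `A = 2` and `B = 3` occur at most once in every reachable word, so the place
where a rule acts is forced, and every reachable configuration has one of seven shapes, with `u`
free of markers: `(uAuB)₁`, `(uaAuB)₂`, `(ubAuB)₃`, `(uAu)₂`, `(uB)₁`, `(u)₂` and `(uu)₁`.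
A round trip `C1 → C2 → C1` (resp. through `C3`) puts the letter `a` (resp. `b`) in front of both
markers, turning `uAuB` into `ucAucB`; deleting `B` and then `A` turns this into `uu`, and `(uu)₁`
is the only one of the seven shapes that is terminal and lies in the final component. -/

theorem _root_.List.append_cons_ne_of_notMem {α : Type*} {s : α} {x y w : List α}
    (hw : s ∉ w) : x ++ s :: y ≠ w := by
  rintro rfl
  simp at hw

theorem insRule_applies_iff {u η v w w' : Word} :
    (insRule u η v).Applies w w' ↔
      ∃ x y, w = x ++ u ++ v ++ y ∧ w' = x ++ u ++ η ++ v ++ y := by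
  simp [InsDelRule.Applies, insRule]

theorem delRule_applies_iff {u δ v w w' : Word} :
    (delRule u δ v).Applies w w' ↔
      ∃ x y, w = x ++ u ++ δ ++ v ++ y ∧ w' = x ++ u ++ v ++ y := by
  simp [InsDelRule.Applies, delRule]

theorem insRule_nil_applies (x y : Word) (a s : ℕ) :
    (insRule [] [a] [s]).Applies (x ++ s :: y) (x ++ a :: s :: y) :=
  insRule_applies_iff.2 ⟨x, y, by simp, by simp⟩

theorem delRule_nil_applies (x y : Word) (s : ℕ) :
    (delRule [] [s] []).Applies (x ++ s :: y) (x ++ y) :=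
  delRule_applies_iff.2 ⟨x, y, by simp, by simp⟩

theorem step_of_mem {S : System} {i j : ℕ} {r : InsDelRule} {w w' : Word}
    (hr : (i, r, j) ∈ S.R) (h : r.Applies w w') : Step S (w, i) (w', j) :=
  ⟨_, hr, rfl, rfl, h⟩

inductive CopyStep : Word × ℕ → Word × ℕ → Prop
  | r1_1 (x y : Word) : CopyStep (x ++ 2 :: y, 1) (x ++ 0 :: 2 :: y, 2)
  | r1_2 (x y : Word) : CopyStep (x ++ 2 :: y, 1) (x ++ 1 :: 2 :: y, 3)
  | r1_3 (x y : Word) : CopyStep (x ++ 3 :: y, 1) (x ++ y, 2)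
  | r2_1 (x y : Word) : CopyStep (x ++ 3 :: y, 2) (x ++ 0 :: 3 :: y, 1)
  | r2_2 (x y : Word) : CopyStep (x ++ 2 :: y, 2) (x ++ y, 1)
  | r3_1 (x y : Word) : CopyStep (x ++ 3 :: y, 3) (x ++ 1 :: 3 :: y, 1)

theorem step_copySystem : Step copySystem = CopyStep := by
  ext ⟨w, i⟩ ⟨w', j⟩
  constructor
  · rintro ⟨q, hq, rfl, rfl, happ⟩
    simp only [copySystem, Finset.mem_insert, Finset.mem_singleton] at hq
    rcases hq with rfl | rfl | rfl | rfl | rfl | rfl <;>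
      simp only [insRule_applies_iff, delRule_applies_iff] at happ <;>
      obtain ⟨x, y, rfl, rfl⟩ := happ <;>
      simp only [List.append_nil, List.nil_append, List.append_assoc, List.cons_append] <;>
      -- the component indices leave exactly one constructor that unifies
      constructor
  · rintro (⟨x, y⟩ | ⟨x, y⟩ | ⟨x, y⟩ | ⟨x, y⟩ | ⟨x, y⟩ | ⟨x, y⟩) <;>
      first
        | exact step_of_mem (by simp [copySystem]) (insRule_nil_applies x y _ _)
        | exact step_of_mem (by simp [copySystem]) (delRule_nil_applies x y _)

theorem derives_copySystem : Derives copySystem = Relation.ReflTransGen CopyStep := by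
  rw [Derives, step_copySystem]

def CopyInv : Word × ℕ → Prop
  | (w, 1) => ∃ u, 2 ∉ u ∧ 3 ∉ u ∧ (w = u ++ 2 :: u ++ [3] ∨ w = u ++ [3] ∨ w = u ++ u)
  | (w, 2) => ∃ u, 2 ∉ u ∧ 3 ∉ u ∧ (w = u ++ 0 :: 2 :: u ++ [3] ∨ w = u ++ 2 :: u ∨ w = u)
  | (w, 3) => ∃ u, 2 ∉ u ∧ 3 ∉ u ∧ w = u ++ 1 :: 2 :: u ++ [3]
  | _ => False

open List in
theorem CopyStep.copyInv {c c' : Word × ℕ} (h : CopyStep c c') (hc : CopyInv c) :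
    CopyInv c' := by
  cases h with
  | r1_1 x y =>
    obtain ⟨u, h2, h3, hw | hw | hw⟩ := hc
    · obtain ⟨rfl, -, rfl⟩ := (append_cons_inj_of_notMem (x₁ := u) (z₁ := u ++ [3]) h2
        (by simp [h2])).1 (by simpa using hw.symm)
      exact ⟨u, h2, h3, .inl (by simp)⟩
    all_goals exact absurd hw (append_cons_ne_of_notMem (by simp [h2]))
  | r1_2 x y =>
    obtain ⟨u, h2, h3, hw | hw | hw⟩ := hc
    · obtain ⟨rfl, -, rfl⟩ := (append_cons_inj_of_notMem (x₁ := u) (z₁ := u ++ [3]) h2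
        (by simp [h2])).1 (by simpa using hw.symm)
      exact ⟨u, h2, h3, by simp⟩
    all_goals exact absurd hw (append_cons_ne_of_notMem (by simp [h2]))
  | r1_3 x y =>
    obtain ⟨u, h2, h3, hw | hw | hw⟩ := hc
    · obtain ⟨rfl, -, rfl⟩ := (append_cons_inj_of_notMem (by simp [h3]) not_mem_nil).1 hw.symm
      exact ⟨u, h2, h3, .inr (.inl (by simp))⟩
    · obtain ⟨rfl, -, rfl⟩ := (append_cons_inj_of_notMem h3 not_mem_nil).1 hw.symm
      exact ⟨u, h2, h3, .inr (.inr (by simp))⟩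
    · exact absurd hw (append_cons_ne_of_notMem (by simp [h3]))
  | r2_1 x y =>
    obtain ⟨u, h2, h3, hw | hw | hw⟩ := hc
    · obtain ⟨rfl, -, rfl⟩ := (append_cons_inj_of_notMem (by simp [h3]) not_mem_nil).1 hw.symm
      exact ⟨u ++ [0], by simp [h2], by simp [h3], .inl (by simp)⟩
    all_goals exact absurd hw (append_cons_ne_of_notMem (by simp [h3]))
  | r2_2 x y =>
    obtain ⟨u, h2, h3, hw | hw | hw⟩ := hc
    · obtain ⟨rfl, -, rfl⟩ := (append_cons_inj_of_notMem (a₂ := 2) (x₁ := u ++ [0])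
        (z₁ := u ++ [3]) (by simp [h2]) (by simp [h2])).1 (by simpa using hw.symm)
      exact ⟨u ++ 0 :: u, by simp [h2], by simp [h3], .inr (.inl (by simp))⟩
    · obtain ⟨rfl, -, rfl⟩ := (append_cons_inj_of_notMem h2 h2).1 hw.symm
      exact ⟨u, h2, h3, .inr (.inr rfl)⟩
    · exact absurd hw (append_cons_ne_of_notMem h2)
  | r3_1 x y =>
    obtain ⟨u, h2, h3, hw⟩ := hc
    obtain ⟨rfl, -, rfl⟩ := (append_cons_inj_of_notMem (by simp [h3]) not_mem_nil).1 hw.symm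
    exact ⟨u ++ [1], by simp [h2], by simp [h3], .inl (by simp)⟩

theorem copyInv_of_reflTransGen {c c' : Word × ℕ} (h : Relation.ReflTransGen CopyStep c c')
    (hc : CopyInv c) : CopyInv c' := by
  induction h with
  | refl => exact hc
  | tail _ hstep ih => exact hstep.copyInv ih

theorem reflTransGen_loop_append {v : Word} {a : ℕ} (ha : a = 0 ∨ a = 1) :
    Relation.ReflTransGen CopyStep (v ++ 2 :: v ++ [3], 1)
      (v ++ [a] ++ 2 :: (v ++ [a]) ++ [3], 1) := by
  rcases ha with rfl | rfl
  · have h₁ := CopyStep.r1_1 v (v ++ [3])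
    have h₂ := CopyStep.r2_1 (v ++ 0 :: 2 :: v) []
    simp only [List.append_assoc, List.cons_append] at h₁ h₂ ⊢
    exact .tail (.single h₁) h₂
  · have h₁ := CopyStep.r1_2 v (v ++ [3])
    have h₂ := CopyStep.r3_1 (v ++ 1 :: 2 :: v) []
    simp only [List.append_assoc, List.cons_append] at h₁ h₂ ⊢
    exact .tail (.single h₁) h₂

theorem reflTransGen_loop {u : Word} (hu : ∀ a ∈ u, a = 0 ∨ a = 1) :
    Relation.ReflTransGen CopyStep ([2, 3], 1) (u ++ 2 :: u ++ [3], 1) := by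
  induction u using List.reverseRecOn with
  | nil => rfl
  | append_singleton v a ih =>
    exact (ih fun b hb => hu b (by simp [hb])).trans (reflTransGen_loop_append (hu a (by simp)))

theorem reflTransGen_copy {u : Word} (hu : ∀ a ∈ u, a = 0 ∨ a = 1) :
    Relation.ReflTransGen CopyStep ([2, 3], 1) (u ++ u, 1) := by
  have h₁ := CopyStep.r1_3 (u ++ 2 :: u) []
  have h₂ := CopyStep.r2_2 u u
  rw [List.append_nil] at h₁
  exact ((reflTransGen_loop hu).tail h₁).tail h₂

theorem language_copySystem : language copySystem = copyLang := by
  ext w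
  simp only [language, derives_copySystem]
  simp only [copySystem, Finset.mem_insert, Finset.mem_singleton, exists_eq_left]
  constructor
  · rintro ⟨hT, hd⟩
    obtain ⟨u, -, -, rfl | rfl | rfl⟩ :=
      copyInv_of_reflTransGen hd ⟨[], by simp, by simp, .inl rfl⟩
    · simpa using hT 2
    · simpa using hT 3
    · exact ⟨u, fun a ha => hT a (by simp [ha]), rfl⟩
  · rintro ⟨u, hu, rfl⟩
    exact ⟨by simpa using hu, reflTransGen_copy hu⟩

theorem copySystem_starControlled : StarControlled copySystem := by
  unfold StarControlled
  decide

theorem copySystem_hasSize : HasSize copySystem 3 1 0 1 1 0 0 := by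
  unfold HasSize InsDelRule.SizeLE
  decide

/-- The system `copySystem` is star-controlled, generates exactly the copy
language `{ ww : w ∈ {a, b}* }`, and in particular the copy language belongs
to `GCID_S(3; 1, 0, 1; 1, 0, 0)`. -/
theorem copySystem_generates_copyLang :
    StarControlled copySystem ∧ language copySystem = copyLang ∧
      copyLang ∈ GCID_S 3 1 0 1 1 0 0 :=
  ⟨copySystem_starControlled, language_copySystem,
    copySystem, copySystem_starControlled, copySystem_hasSize, language_copySystem⟩

end GCIDPaper
end

section
/- The star-controlled GCID system with two components, alphabet V = T = {a, b, c, d}, axiom abcd in component C1, initial and final component C1, and rules (1, (a, a, λ)_I, 2), (1, (b, b, λ)_I, 2), (2, (c, c, λ)_I, 1), (2, (d, d, λ)_I, 1) generates exactly the language { aⁱbʲcⁿdᵐ : i, j, m, n ≥ 1 and i + j = n + m }. -/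
/-!
Graph-controlled insertion-deletion (GCID) systems.

Symbols are drawn from the universal symbol set `ℕ`, strings are lists of
symbols.  A GCID system `Π = (k, V, T, A, H, i0, F, R)` has `k` components;
rules `(i, r, j)` move a string from component `i` to component `j`, where
`r` is an insertion rule `(u, η, v)_I` (rewriting `uv → uηv`) or a deletion
rule `(u, δ, v)_D` (rewriting `uδv → uv`), with `u, v ∈ V*` and `η, δ ∈ V⁺`.
-/

namespace GCIDPaper

/-- The star-controlled GCID system with two components, alphabet
`V = T = {a, b, c, d}` (encoded as `a = 0`, `b = 1`, `c = 2`, `d = 3`), axiom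
`abcd` in component `C1`, initial and final component `C1`, and rules
`(1, (a, a, λ)_I, 2)`, `(1, (b, b, λ)_I, 2)`, `(2, (c, c, λ)_I, 1)`,
`(2, (d, d, λ)_I, 1)`. -/
def mergedSystem : System where
  k := 2
  V := {0, 1, 2, 3}
  T := {0, 1, 2, 3}
  axioms := {[0, 1, 2, 3]}
  i0 := 1
  F := {1}
  R := {(1, insRule [0] [0] [], 2), (1, insRule [1] [1] [], 2),
        (2, insRule [2] [2] [], 1), (2, insRule [3] [3] [], 1)}
  k_pos := by decide
  T_sub_V := by decide
  axioms_over_V := by decide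
  i0_mem := by decide
  F_sub := by decide
  R_wf := by decide

/-!
Each rule inserts a letter right next to a copy of itself, so every reachable string stays
sorted, keeps each of the four letters, and is therefore `aⁱbʲcⁿdᵐ` with `i, j, n, m` its letter
counts. Rules alternate between the components: going `C1 → C2` adds an `a` or a `b`, coming
back adds a `c` or a `d`, so in `C1` we have `i + j = n + m`. Conversely, any such word is
reached from `abcd` by `i + j - 2` round trips, each adding one of `a, b` and one of `c, d`.
-/

theorem mergedSystem_starControlled : StarControlled mergedSystem := by
  refine ⟨fun q hq => ⟨2, by decide, ?_⟩, fun i hi => ?_⟩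
  · fin_cases hq <;> decide
  · obtain rfl : i = 2 := by simp only [mergedSystem, Finset.mem_Icc] at hi; omega
    exact ⟨(1, insRule [0] [0] [], 2), by decide, rfl⟩

theorem insRule_dup_applies_iff {s : ℕ} {w w' : Word} :
    (insRule [s] [s] []).Applies w w' ↔ ∃ x y, w = x ++ s :: y ∧ w' = x ++ s :: s :: y := by
  simp [InsDelRule.Applies, insRule]

theorem step_of_mem_dup {S : System} {i i' s : ℕ} {w w' : Word}
    (h : (i, insRule [s] [s] [], i') ∈ S.R) (x y : Word) (hw : w = x ++ s :: y)
    (hw' : w' = x ++ s :: s :: y) : Step S (w, i) (w', i') :=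
  ⟨_, h, rfl, rfl, insRule_dup_applies_iff.2 ⟨x, y, hw, hw'⟩⟩

theorem _root_.List.Pairwise.append_cons_cons {α : Type*} {R : α → α → Prop} {x y : List α}
    {s : α} (h : (x ++ s :: y).Pairwise R) (hs : R s s) : (x ++ s :: s :: y).Pairwise R := by
  simp only [List.pairwise_append, List.pairwise_cons, List.mem_cons] at h ⊢
  obtain ⟨hx, ⟨hsy, hy⟩, hxy⟩ := h
  refine ⟨hx, ⟨?_, hsy, hy⟩, fun a ha b hb => ?_⟩
  · rintro b (rfl | hb)
    exacts [hs, hsy b hb]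
  · rcases hb with rfl | rfl | hb
    exacts [hxy a ha b (.inl rfl), hxy a ha b (.inl rfl), hxy a ha b (.inr hb)]

def word (i j n m : ℕ) : Word :=
  List.replicate i 0 ++ List.replicate j 1 ++ List.replicate n 2 ++ List.replicate m 3

theorem eq_word_count_of_pairwise {w : Word} (hw : w.Pairwise (· ≤ ·)) (h3 : ∀ a ∈ w, a ≤ 3) :
    w = word (w.count 0) (w.count 1) (w.count 2) (w.count 3) := by
  refine List.Perm.eq_of_pairwise' hw ?_ (List.perm_iff_count.2 fun a => ?_)
  · simp [word, List.pairwise_append, List.pairwise_replicate]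
    omega
  · by_cases ha : a ≤ 3
    · interval_cases a <;> simp [word, List.count_replicate]
    · rw [List.count_eq_zero.2 fun h => ha (h3 a h)]
      simp only [word, List.count_append, List.count_replicate, beq_iff_eq]
      split_ifs <;> omega

structure MergedInvariant (c : Word × ℕ) : Prop where
  pairwise_le : c.1.Pairwise (· ≤ ·)
  le_three : ∀ a ∈ c.1, a ≤ 3
  count_pos : ∀ a ≤ 3, 0 < c.1.count a
  /-- The string is in `C2` exactly when one `a` or `b` still awaits its matching `c` or `d`. -/
  balance : c.1.count 0 + c.1.count 1 + 1 = c.1.count 2 + c.1.count 3 + c.2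

theorem MergedInvariant.step {c c' : Word × ℕ} (hc : MergedInvariant c)
    (h : Step mergedSystem c c') : MergedInvariant c' := by
  obtain ⟨w, _⟩ := c
  obtain ⟨w', _⟩ := c'
  obtain ⟨⟨i, r, i'⟩, hq, hi, hi', happ⟩ := h
  dsimp only at hi hi' happ
  subst hi hi'
  obtain ⟨s, hr, hs, hcomp⟩ : ∃ s, r = insRule [s] [s] [] ∧ s ≤ 3 ∧
      (s < 2 ∧ i = 1 ∧ i' = 2 ∨ 2 ≤ s ∧ i = 2 ∧ i' = 1) := by
    simp only [mergedSystem, Finset.mem_insert, Finset.mem_singleton, Prod.mk.injEq] at hq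
    rcases hq with ⟨rfl, rfl, rfl⟩ | ⟨rfl, rfl, rfl⟩ | ⟨rfl, rfl, rfl⟩ | ⟨rfl, rfl, rfl⟩ <;>
      exact ⟨_, rfl, by omega⟩
  subst hr
  obtain ⟨x, y, hw, hw'⟩ := insRule_dup_applies_iff.1 happ
  obtain ⟨hsort, hle, hpos, hbal⟩ := hc
  subst hw hw'
  have hsub : (x ++ s :: y).Sublist (x ++ s :: s :: y) :=
    (List.sublist_cons_self s (s :: y)).append_left x
  have hcount (a : ℕ) :
      (x ++ s :: s :: y).count a = (x ++ s :: y).count a + if s = a then 1 else 0 := by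
    simp only [List.count_append, List.count_cons, beq_iff_eq]
    omega
  refine ⟨hsort.append_cons_cons le_rfl, fun a ha => hle a ?_,
    fun a ha => (hpos a ha).trans_le (hsub.count_le a), ?_⟩
  · simpa using ha
  · dsimp only at hbal ⊢
    simp only [hcount]
    split_ifs <;> omega

theorem MergedInvariant.derives {c c' : Word × ℕ} (hc : MergedInvariant c)
    (h : Derives mergedSystem c c') : MergedInvariant c' := by
  induction h with
  | refl => exact hc
  | tail _ hstep ih => exact ih.step hstep

section Rounds

open List

variable (i j n m : ℕ)

theorem step_insert_a : Step mergedSystem (word (i + 1) j n m, 1) (word (i + 2) j n m, 2) :=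
  step_of_mem_dup (s := 0) (by decide) []
    (replicate i 0 ++ (replicate j 1 ++ (replicate n 2 ++ replicate m 3)))
    (by simp [word, replicate_succ]) (by simp [word, replicate_succ])

theorem step_insert_b : Step mergedSystem (word i (j + 1) n m, 1) (word i (j + 2) n m, 2) :=
  step_of_mem_dup (s := 1) (by decide) (replicate i 0)
    (replicate j 1 ++ (replicate n 2 ++ replicate m 3))
    (by simp [word, replicate_succ]) (by simp [word, replicate_succ])

theorem step_insert_c : Step mergedSystem (word i j (n + 1) m, 2) (word i j (n + 2) m, 1) :=
  step_of_mem_dup (s := 2) (by decide) (replicate i 0 ++ replicate j 1)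
    (replicate n 2 ++ replicate m 3)
    (by simp [word, replicate_succ]) (by simp [word, replicate_succ])

theorem step_insert_d : Step mergedSystem (word i j n (m + 1), 2) (word i j n (m + 2), 1) :=
  step_of_mem_dup (s := 3) (by decide) (replicate i 0 ++ replicate j 1 ++ replicate n 2)
    (replicate m 3)
    (by simp [word, replicate_succ]) (by simp [word, replicate_succ])

end Rounds

theorem derives_round {i j n m i' j' n' m' : ℕ} (hi : 1 ≤ i) (hj : 1 ≤ j) (hn : 1 ≤ n)
    (hm : 1 ≤ m) (hab : i' = i + 1 ∧ j' = j ∨ i' = i ∧ j' = j + 1)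
    (hcd : n' = n + 1 ∧ m' = m ∨ n' = n ∧ m' = m + 1) :
    Derives mergedSystem (word i j n m, 1) (word i' j' n' m', 1) := by
  obtain ⟨i, rfl⟩ := Nat.exists_eq_add_of_le' hi
  obtain ⟨j, rfl⟩ := Nat.exists_eq_add_of_le' hj
  obtain ⟨n, rfl⟩ := Nat.exists_eq_add_of_le' hn
  obtain ⟨m, rfl⟩ := Nat.exists_eq_add_of_le' hm
  rcases hab with ⟨rfl, rfl⟩ | ⟨rfl, rfl⟩ <;> rcases hcd with ⟨rfl, rfl⟩ | ⟨rfl, rfl⟩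
  · exact .tail (.single (step_insert_a ..)) (step_insert_c ..)
  · exact .tail (.single (step_insert_a ..)) (step_insert_d ..)
  · exact .tail (.single (step_insert_b ..)) (step_insert_c ..)
  · exact .tail (.single (step_insert_b ..)) (step_insert_d ..)

theorem exists_pred_of_three_le_add {i j : ℕ} (hi : 1 ≤ i) (hj : 1 ≤ j) (h : 3 ≤ i + j) :
    ∃ i₀ j₀, 1 ≤ i₀ ∧ 1 ≤ j₀ ∧ (i = i₀ + 1 ∧ j = j₀ ∨ i = i₀ ∧ j = j₀ + 1) := by
  by_cases h2 : 2 ≤ i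
  exacts [⟨i - 1, j, by omega⟩, ⟨i, j - 1, by omega⟩]

theorem derives_word {i j n m : ℕ} (hi : 1 ≤ i) (hj : 1 ≤ j) (hn : 1 ≤ n) (hm : 1 ≤ m)
    (h : i + j = n + m) : Derives mergedSystem (word 1 1 1 1, 1) (word i j n m, 1) := by
  induction hk : i + j generalizing i j n m with
  | zero => omega
  | succ k ih =>
    by_cases hk2 : k = 1
    · obtain ⟨rfl, rfl, rfl, rfl⟩ : i = 1 ∧ j = 1 ∧ n = 1 ∧ m = 1 := by omega
      exact .refl
    obtain ⟨i₀, j₀, hi₀, hj₀, hab⟩ := exists_pred_of_three_le_add hi hj (by omega)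
    obtain ⟨n₀, m₀, hn₀, hm₀, hcd⟩ := exists_pred_of_three_le_add hn hm (by omega)
    exact (ih hi₀ hj₀ hn₀ hm₀ (by omega) (by omega)).trans
      (derives_round hi₀ hj₀ hn₀ hm₀ hab hcd)

/-- The system `mergedSystem` is star-controlled and generates exactly the
language `{ aⁱbʲcⁿdᵐ : i, j, m, n ≥ 1 and i + j = n + m }`. -/
theorem mergedSystem_generates :
    StarControlled mergedSystem ∧
      language mergedSystem =
        { w : Word | ∃ i j n m : ℕ, 1 ≤ i ∧ 1 ≤ j ∧ 1 ≤ n ∧ 1 ≤ m ∧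
          i + j = n + m ∧
          w = List.replicate i 0 ++ List.replicate j 1 ++
              List.replicate n 2 ++ List.replicate m 3 } := by
  refine ⟨mergedSystem_starControlled, Set.ext fun w => ⟨?_, ?_⟩⟩
  · rintro ⟨-, x, hx, f, hf, hder⟩
    simp only [mergedSystem, Finset.mem_singleton] at hx hf
    subst hx hf
    obtain ⟨hsort, hle, hpos, hbal⟩ :=
      MergedInvariant.derives ⟨by decide, by decide, by decide, rfl⟩ hder
    exact ⟨_, _, _, _, hpos 0 (by norm_num), hpos 1 (by norm_num), hpos 2 (by norm_num),
      hpos 3 le_rfl, by omega, eq_word_count_of_pairwise hsort hle⟩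
  · rintro ⟨i, j, n, m, hi, hj, hn, hm, h, rfl⟩
    refine ⟨fun a ha => ?_, _, Finset.mem_singleton_self _, 1, Finset.mem_singleton_self _,
      derives_word hi hj hn hm h⟩
    simp only [List.mem_append, List.mem_replicate] at ha
    simp only [mergedSystem, Finset.mem_insert, Finset.mem_singleton]
    omega

end GCIDPaper
end
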